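/- Define Φ : H_n → H_n on the subspace H_n ⊆ M_n(K) of matrices of the form [[M, C],[0, a]] (with M ∈ M_{n−1}(K), C a column, a ∈ K, n ≥ 3) by Φ([[M, C],[0, a]]) = [[M, C + m_{2,2}·e₁],[0, a]], where m_{2,2} is the (2,2) entry of M and e₁ is the first standard basis column vector. Then Φ is a linear bijection of H_n satisfying: for all X ∈ H_n, Φ(X) is invertible if and only if X is invertible; but Φ is not a rank preserver (there exists X ∈ H_n with rank X = 1 and rank Φ(X) = 2). -/

import Mathlib

/-!
`Φ` is the transvection `X ↦ X + X₁₁ • E₀ₗ` (0-based indices, `l` the last index): the matrix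
unit `E₀ₗ` lies in `H_n` and has vanishing `(1,1)` entry, so `Φ` restricts to a linear
automorphism of `H_n` with inverse `X ↦ X - X₁₁ • E₀ₗ`. It only adds a multiple of `e₀` to the
last column; as the last row of `X ∈ H_n` vanishes off the diagonal, the added column contributes
a determinant with a zero row, so `det Φ(X) = det X`. Yet `Φ(E₁₁) = E₁₁ + E₀ₗ` has rank two.
-/

/-- The subspace `H_n` of `(m+1) × (m+1)` matrices of block form `[[M, C],[0, a]]`,
i.e. whose last row vanishes except possibly at the last entry. -/
def Hn (K : Type*) [Field K] (m : ℕ) : Submodule K (Matrix (Fin (m + 1)) (Fin (m + 1)) K) where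
  carrier := {X | ∀ j : Fin m, X (Fin.last m) j.castSucc = 0}
  add_mem' := by
    intro a b ha hb j
    simp [Matrix.add_apply, ha j, hb j]
  zero_mem' := by simp
  smul_mem' := by
    intro c a ha j
    simp [Matrix.smul_apply, ha j]

/-- The map `Φ` adding the `(2,2)` entry of the upper-left block to the first
entry of the last column. -/
def Phi {K : Type*} [Field K] (m : ℕ) (X : Matrix (Fin (m + 1)) (Fin (m + 1)) K) :
    Matrix (Fin (m + 1)) (Fin (m + 1)) K :=
  X + Matrix.single 0 (Fin.last m) (X 1 1)

open Matrix

namespace Matrix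

theorem det_add_single_of_row_eq_zero {n R : Type*} [Fintype n] [DecidableEq n] [CommRing R]
    {A : Matrix n n R} {i k j : n} (hik : i ≠ k) (hA : ∀ l ≠ j, A i l = 0) (c : R) :
    (A + single k j c).det = A.det := by
  have hcol : A + single k j c = A.updateCol j ((fun r => A r j) + Pi.single k c) := by
    ext r l
    by_cases hl : l = j
    · subst hl
      simp [single_apply, Pi.single_apply, eq_comm]
    · simp [updateCol_ne hl, Ne.symm hl]
  have hzero : (A.updateCol j (Pi.single k c)).det = 0 :=
    det_eq_zero_of_row_eq_zero i fun l => by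
      by_cases hl : l = j
      · simp [hl, hik]
      · simp [updateCol_ne hl, hA l hl]
  rw [hcol, det_updateCol_add, updateCol_eq_self, hzero, add_zero]

theorem rank_eq_card_of_submatrix_eq_one {m n ι R : Type*} [Fintype n] [Fintype ι]
    [DecidableEq ι] [CommSemiring R] [StrongRankCondition R] {A : Matrix m n R}
    {r : ι → m} {c : ι → n} (hone : A.submatrix r c = 1) (hrows : ∀ i ∉ Set.range r, A i = 0) :
    A.rank = Fintype.card ι := by
  classical
  refine le_antisymm ?_ ?_
  · calc A.rank ≤ (Finset.univ.image r).card :=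
          A.rank_le_card_of_support_subset _ fun i hi => by
            by_contra h
            exact hi (hrows i (by simpa using h))
      _ ≤ Fintype.card ι := Finset.card_image_le
  · calc Fintype.card ι = (A.submatrix r c).rank := by rw [hone, rank_one]
      _ ≤ A.rank := rank_submatrix_le A r c

section SingleRank
variable {m n R : Type*} [Fintype n] [DecidableEq m] [DecidableEq n] [CommSemiring R]
  [StrongRankCondition R]

theorem rank_single_one (i : m) (j : n) : (single i j (1 : R)).rank = 1 := by
  refine rank_eq_card_of_submatrix_eq_one (r := fun _ : Unit => i) (c := fun _ => j) ?_ ?_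
  · ext
    simp
  · intro i' hi'
    ext j'
    exact single_apply_of_row_ne (fun h => hi' ⟨(), h⟩) _ _ _

theorem rank_single_one_add_single_one {i i' : m} {j j' : n} (hi : i ≠ i') (hj : j ≠ j') :
    (single i j (1 : R) + single i' j' 1).rank = 2 := by
  refine rank_eq_card_of_submatrix_eq_one (r := ![i, i']) (c := ![j, j']) ?_ ?_
  · ext a b
    fin_cases a <;> fin_cases b <;> simp [hi, hj, hi.symm, hj.symm]
  · intro k hk
    ext l
    simp only [Set.mem_range, Fin.exists_fin_two, cons_val_zero, cons_val_one, not_or] at hk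
    simp only [add_apply, single_apply_of_row_ne hk.1, single_apply_of_row_ne hk.2, add_zero,
      Pi.zero_apply]

end SingleRank

end Matrix

namespace LinearMap.transvection

variable {R V : Type*}

theorem mapsTo [Semiring R] [AddCommMonoid V] [Module R V] {f : Module.Dual R V} {v : V}
    {p : Submodule R V} (hv : v ∈ p) : Set.MapsTo (transvection f v) p p :=
  fun _ hx => p.add_mem hx (p.smul_mem _ hv)

theorem bijOn [Ring R] [AddCommGroup V] [Module R V] {f : Module.Dual R V} {v : V}
    {p : Submodule R V} (hfv : f v = 0) (hv : v ∈ p) : Set.BijOn (transvection f v) p p := by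
  have hfv' : f (-v) = 0 := by simp [hfv]
  refine Set.InvOn.bijOn (f' := transvection f (-v)) ⟨fun x _ => ?_, fun x _ => ?_⟩
    (mapsTo hv) (mapsTo (p.neg_mem hv))
  · simp [comp_of_left_eq_apply hfv]
  · simp [comp_of_left_eq_apply hfv']

end LinearMap.transvection

section Phi
variable {K : Type*} [Field K] {m : ℕ}

theorem zero_ne_one_of_one_le (hm : 1 ≤ m) : (0 : Fin (m + 1)) ≠ 1 := by
  obtain ⟨k, rfl⟩ := Nat.exists_eq_add_of_le' hm
  simp

theorem last_ne_zero_of_one_le (hm : 1 ≤ m) : Fin.last m ≠ 0 := by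
  simp [Fin.ext_iff]
  omega

theorem one_ne_last (hm : 2 ≤ m) : (1 : Fin (m + 1)) ≠ Fin.last m := by
  obtain ⟨k, rfl⟩ := Nat.exists_eq_add_of_le' hm
  simp [Fin.ext_iff]

theorem mem_Hn_iff {X : Matrix (Fin (m + 1)) (Fin (m + 1)) K} :
    X ∈ Hn K m ↔ ∀ j ≠ Fin.last m, X (Fin.last m) j = 0 := by
  refine ⟨fun h j hj => ?_, fun h j => h _ (Fin.castSucc_lt_last j).ne⟩
  obtain ⟨j, rfl⟩ := Fin.exists_castSucc_eq.mpr hj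
  exact h j

theorem single_zero_last_mem_Hn : single 0 (Fin.last m) (1 : K) ∈ Hn K m :=
  fun j => single_apply_of_col_ne _ _ (Fin.castSucc_lt_last j).ne' _

theorem single_one_one_mem_Hn (hm : 2 ≤ m) : single 1 1 (1 : K) ∈ Hn K m :=
  fun _ => single_apply_of_row_ne (one_ne_last hm) _ _ _

theorem Phi_eq_transvection (m : ℕ) :
    Phi (K := K) m = LinearMap.transvection (entryLinearMap K K 1 1) (single 0 (Fin.last m) 1) := by
  funext X
  simp [Phi, LinearMap.transvection.apply, smul_single]

theorem Phi_bijOn (hm : 1 ≤ m) :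
    Set.BijOn (Phi m) (Hn K m : Set (Matrix (Fin (m + 1)) (Fin (m + 1)) K)) (Hn K m) := by
  have hfv : entryLinearMap K K (1 : Fin (m + 1)) 1 (single 0 (Fin.last m) (1 : K)) = 0 :=
    single_apply_of_row_ne (zero_ne_one_of_one_le hm) _ _ _
  rw [Phi_eq_transvection]
  exact LinearMap.transvection.bijOn hfv single_zero_last_mem_Hn

theorem det_Phi (hm : 1 ≤ m) {X : Matrix (Fin (m + 1)) (Fin (m + 1)) K} (hX : X ∈ Hn K m) :
    (Phi m X).det = X.det :=
  det_add_single_of_row_eq_zero (last_ne_zero_of_one_le hm) (mem_Hn_iff.mp hX) _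

theorem isUnit_Phi_iff (hm : 1 ≤ m) {X : Matrix (Fin (m + 1)) (Fin (m + 1)) K}
    (hX : X ∈ Hn K m) : IsUnit (Phi m X) ↔ IsUnit X := by
  rw [isUnit_iff_isUnit_det, isUnit_iff_isUnit_det, det_Phi hm hX]

theorem rank_Phi_single_one_one (hm : 2 ≤ m) : (Phi m (single 1 1 (1 : K))).rank = 2 := by
  rw [Phi, single_apply_same]
  exact rank_single_one_add_single_one (zero_ne_one_of_one_le (by omega)).symm (one_ne_last hm)

end Phi

theorem stmt_19 {K : Type*} [Field K] (m : ℕ) (hm : 2 ≤ m) :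
    IsLinearMap K (Phi (K := K) m) ∧
    (∀ X ∈ Hn K m, Phi m X ∈ Hn K m) ∧
    Set.BijOn (Phi m) (Hn K m : Set (Matrix (Fin (m + 1)) (Fin (m + 1)) K))
      (Hn K m : Set (Matrix (Fin (m + 1)) (Fin (m + 1)) K)) ∧
    (∀ X ∈ Hn K m, (IsUnit (Phi m X) ↔ IsUnit X)) ∧
    (∃ X ∈ Hn K m, X.rank = 1 ∧ (Phi m X).rank = 2) := by
  have hm1 : 1 ≤ m := by omega
  refine ⟨?_, fun _ hX => (Phi_bijOn hm1).mapsTo hX, Phi_bijOn hm1,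
    fun _ hX => isUnit_Phi_iff hm1 hX, single 1 1 1, single_one_one_mem_Hn hm,
    rank_single_one 1 1, rank_Phi_single_one_one hm⟩
  rw [Phi_eq_transvection]
  exact LinearMap.isLinear _
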